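/- Let M be a minimal abelian Hausdorff topological group, G a topological group, and E an essential subgroup of G. If M × E is minimal, then M × E is an essential subgroup of M × G. -/

import Mathlib

/-- The quasi-component of the identity (zero) element of a topological (additive) group:
the intersection of all clopen sets containing the identity. -/
def quasiComponent (G : Type*) [Zero G] [TopologicalSpace G] : Set G :=
  ⋂₀ {U : Set G | IsClopen U ∧ (0 : G) ∈ U}

/-- A subgroup `E` of a topological group `G` is *essential* (`E ≤_e G`) if `E ∩ N` is
non-trivial for every non-trivial closed normal subgroup `N` of `G`. -/
def IsEssential {G : Type*} [AddGroup G] [TopologicalSpace G] (E : AddSubgroup G) : Prop :=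
  ∀ N : AddSubgroup G, N.Normal → IsClosed (N : Set G) → N ≠ ⊥ → E ⊓ N ≠ ⊥

/-- A (Hausdorff) topological group is *minimal* if there is no strictly coarser Hausdorff
group topology on it. -/
def IsMinimalAddGroup (G : Type*) [AddGroup G] [tG : TopologicalSpace G] : Prop :=
  ∀ t : TopologicalSpace G, tG ≤ t → @IsTopologicalAddGroup G t _ → @T2Space G t → t = tG

/-- A space is *pseudocompact* if every continuous real-valued function on it is bounded. -/
def IsPseudocompact (X : Type*) [TopologicalSpace X] : Prop :=
  ∀ f : X → ℝ, Continuous f → ∃ B : ℝ, ∀ x : X, |f x| ≤ B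

/-!
If a non-trivial closed normal subgroup `N` of `M × G` met `M × E` trivially, the quotient map
would restrict to a continuous injective homomorphism from `M × E` to the Hausdorff group
`(M × G) ⧸ N`, hence, `M × E` being minimal, to an embedding. The projection `K` of `N` to `G`
is non-trivial, so its closure contains some `e ≠ 0` in `E`. Modulo `N`, each `(0, k)` with
`k ∈ K` is congruent to some `(m, 0)`, so `(0, e)` lies in the closure of `M × {0}` in the
quotient, hence in `M × E`, where `M × {0}` is closed. Thus `e = 0`.
-/

open Topology

theorem IsMinimalAddGroup.isEmbedding_of_injective {A H : Type*} [AddGroup A]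
    [TopologicalSpace A] [AddGroup H] [TopologicalSpace H] [IsTopologicalAddGroup H]
    [T2Space H] (hA : IsMinimalAddGroup A) (f : A →+ H) (hf : Continuous f)
    (hinj : Function.Injective f) : IsEmbedding f := by
  have h_induced : TopologicalSpace.induced f ‹_› = ‹TopologicalSpace A› := by
    let : TopologicalSpace A := TopologicalSpace.induced f ‹_›
    exact hA _ (continuous_iff_le_induced.mp hf) (topologicalAddGroup_induced f)
      (IsEmbedding.t2Space ⟨⟨rfl⟩, hinj⟩)
  exact ⟨⟨h_induced.symm⟩, hinj⟩

theorem QuotientAddGroup.injective_mk'_comp {A H : Type*} [AddGroup A] [AddGroup H]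
    (N : AddSubgroup H) [N.Normal] (f : A →+ H) (hinj : Function.Injective f)
    (hN : f.range ⊓ N = ⊥) : Function.Injective ((QuotientAddGroup.mk' N).comp f) := by
  refine (injective_iff_map_eq_zero _).mpr fun x hx => hinj ?_
  have hfx : f x ∈ f.range ⊓ N := ⟨⟨x, rfl⟩, (QuotientAddGroup.eq_zero_iff _).mp hx⟩
  rw [hN, AddSubgroup.mem_bot] at hfx
  rw [hfx, map_zero]

section Prod

variable {M G : Type*} [AddGroup M] [AddGroup G]

theorem AddSubgroup.map_snd_ne_bot {N : AddSubgroup (M × G)} {E : AddSubgroup G}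
    (hN : N ≠ ⊥) (hNE : (⊤ : AddSubgroup M).prod E ⊓ N = ⊥) :
    N.map (AddMonoidHom.snd M G) ≠ ⊥ := by
  intro hK
  have hle : N ≤ (⊤ : AddSubgroup M).prod E :=
    AddSubgroup.le_prod_iff.mpr ⟨le_top, hK ▸ bot_le⟩
  exact hN (by rwa [inf_eq_right.mpr hle] at hNE)

theorem QuotientAddGroup.exists_mk_inl_eq_mk_inr {N : AddSubgroup (M × G)} {k : G}
    (hk : k ∈ N.map (AddMonoidHom.snd M G)) :
    ∃ m : M, (((m, 0) : M × G) : (M × G) ⧸ N) = ((0, k) : M × G) := by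
  obtain ⟨n, hn, rfl⟩ := hk
  refine ⟨-n.1, QuotientAddGroup.eq.mpr ?_⟩
  simpa using N.neg_mem hn

theorem QuotientAddGroup.mk_inr_mem_closure_range_mk_inl [TopologicalSpace M] [TopologicalSpace G]
    {N : AddSubgroup (M × G)} {e : G} (he : e ∈ closure (N.map (AddMonoidHom.snd M G) : Set G)) :
    (((0, e) : M × G) : (M × G) ⧸ N) ∈
      closure (Set.range fun m : M => (((m, 0) : M × G) : (M × G) ⧸ N)) := by
  exact map_mem_closure (f := fun g : G => (((0, g) : M × G) : (M × G) ⧸ N))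
    (by fun_prop) he fun _ hk => QuotientAddGroup.exists_mk_inl_eq_mk_inr hk

end Prod

theorem prodMin_essential_in_prod_general {M : Type*} [AddCommGroup M]
    [TopologicalSpace M] [IsTopologicalAddGroup M]
    {G : Type*} [AddGroup G] [TopologicalSpace G] [IsTopologicalAddGroup G]
    (E : AddSubgroup G) (hE : IsEssential E)
    (hME : IsMinimalAddGroup (M × ↥E)) :
    IsEssential ((⊤ : AddSubgroup M).prod E) := by
  intro N _ _ hN hNE
  set K := N.map (AddMonoidHom.snd M G)
  have : K.Normal := ‹N.Normal›.map _ fun g => ⟨(0, g), rfl⟩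
  obtain ⟨⟨e, heE, heK⟩, he⟩ := AddSubgroup.ne_bot_iff_exists_ne_zero.mp <|
    hE K.topologicalClosure K.is_normal_topologicalClosure K.isClosed_topologicalClosure
      fun h => AddSubgroup.map_snd_ne_bot hN hNE (le_bot_iff.mp (h ▸ K.le_topologicalClosure))
  let ψ := (QuotientAddGroup.mk' N).comp ((AddMonoidHom.id M).prodMap E.subtype)
  have hψ : IsEmbedding ψ := by
    refine hME.isEmbedding_of_injective ψ
      (continuous_quot_mk.comp (continuous_id.prodMap continuous_subtype_val)) ?_
    refine QuotientAddGroup.injective_mk'_comp N _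
      (Function.injective_id.prodMap E.subtype_injective) ?_
    rwa [AddMonoidHom.range_prodMap, AddSubgroup.range_subtype,
      (AddMonoidHom.id M).range_eq_top_of_surjective Function.surjective_id]
  have : T2Space (M × E) := hψ.t2Space
  have : T2Space E := (isEmbedding_prodMkRight (0 : M)).t2Space
  have hclosure :
      ((0 : M), (⟨e, heE⟩ : E)) ∈ closure (Set.range fun m : M => (m, (0 : E))) := by
    rw [hψ.isInducing.closure_eq_preimage_closure_image, ← Set.range_comp]
    exact QuotientAddGroup.mk_inr_mem_closure_range_mk_inl heK
  have h_snd : (⟨e, heE⟩ : E) = 0 := closure_minimal (by rintro _ ⟨m, rfl⟩; rfl)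
    ((isClosed_singleton (x := (0 : E))).preimage continuous_snd) hclosure
  exact he (Subtype.ext (show e = 0 from congrArg Subtype.val h_snd))

/-- **Lemma 2.7(c).** Let `M` be a minimal abelian Hausdorff group, `G` a topological group and
`E` an essential subgroup of `G`. If `M × E` is minimal, then `M × E` is an essential subgroup
of `M × G`. -/
theorem prodMin_essential_in_prod {M : Type*} [AddCommGroup M]
    [TopologicalSpace M] [IsTopologicalAddGroup M] [T2Space M]
    {G : Type*} [AddGroup G] [TopologicalSpace G] [IsTopologicalAddGroup G]
    (hM : IsMinimalAddGroup M) (E : AddSubgroup G) (hE : IsEssential E)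
    (hME : IsMinimalAddGroup (M × ↥E)) :
    IsEssential ((⊤ : AddSubgroup M).prod E) :=
  prodMin_essential_in_prod_general E hE hME
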